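/- arXiv:1504.03465 — 3 statements merged into one kernel-verified Lean document; each statement's English description precedes it below -/
import Mathlib

section
/- Let H be a complex Hilbert space, let M₁, …, M_k be linear subspaces of H, and let M = M₁ + ⋯ + M_k. Consider the bounded operator T : cl(M₁) ⊕ ⋯ ⊕ cl(M_k) → H defined by T(m₁, …, m_k) = m₁ + ⋯ + m_k. Suppose there exists a constant C > 0 such that for every h ∈ M and every ε > 0 there are m₁ ∈ M₁, …, m_k ∈ M_k with ‖h − (m₁ + ⋯ + m_k)‖ ≤ ε and ∑_{i=1}^k ‖m_i‖² ≤ C‖h‖². Then T has closed range, and moreover the range of T equals the closure of M in H. -/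
/-!
Iterating an approximate preimage with relative error `1/2` and controlled norm produces a
geometrically convergent series in the complete space `⊕ cl(Mᵢ)` whose image under `T` is
the point itself. The approximation hypothesis on `M` passes to its closure (approximate
`y ∈ cl M` by `s ∈ M` first, at the cost of a factor `4` in the constant), so `T` maps onto
`cl M`; it maps into `cl M` because each `cl Mᵢ ⊆ cl M`.
-/

open Filter Topology

theorem ContinuousLinearMap.subset_range_of_approx {𝕜 E F : Type*} [NontriviallyNormedField 𝕜]
    [NormedAddCommGroup E] [NormedSpace 𝕜 E] [CompleteSpace E]
    [NormedAddCommGroup F] [NormedSpace 𝕜 F] (f : E →L[𝕜] F) {K : Set F} {C : ℝ}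
    (hC : 0 ≤ C)
    (happrox : ∀ y ∈ K, ∃ x, y - f x ∈ K ∧ ‖y - f x‖ ≤ ‖y‖ / 2 ∧ ‖x‖ ≤ C * ‖y‖) :
    K ⊆ Set.range f := by
  intro y hy
  choose! a haK hahalf hanorm using happrox
  let r : ℕ → F := fun n => (fun z => z - f (a z))^[n] y
  have hr_succ (n : ℕ) : r (n + 1) = r n - f (a (r n)) := Function.iterate_succ_apply' _ n y
  have hrK (n : ℕ) : r n ∈ K := by
    induction n with
    | zero => exact hy
    | succ n ih => rw [hr_succ]; exact haK _ ih
  have hr_norm (n : ℕ) : ‖r n‖ ≤ (1 / 2) ^ n * ‖y‖ := by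
    induction n with
    | zero => simp [r]
    | succ n ih =>
      rw [hr_succ, pow_succ]
      linarith [hahalf _ (hrK n)]
  have ha_norm (n : ℕ) : ‖a (r n)‖ ≤ C * ‖y‖ * (1 / 2) ^ n :=
    calc ‖a (r n)‖ ≤ C * ‖r n‖ := hanorm _ (hrK n)
      _ ≤ C * ((1 / 2) ^ n * ‖y‖) := by gcongr; exact hr_norm n
      _ = C * ‖y‖ * (1 / 2) ^ n := by ring
  have hsum : Summable fun n => a (r n) :=
    .of_norm_bounded (summable_geometric_two.mul_left _) ha_norm
  have hr_zero : Tendsto r atTop (𝓝 0) := by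
    refine squeeze_zero_norm hr_norm ?_
    simpa using (tendsto_pow_atTop_nhds_zero_of_lt_one (by norm_num : (0 : ℝ) ≤ 1 / 2)
      (by norm_num)).mul_const ‖y‖
  have hpartial : Tendsto (fun N => ∑ n ∈ Finset.range N, f (a (r n))) atTop (𝓝 y) := by
    have hf (n : ℕ) : f (a (r n)) = r n - r (n + 1) := by rw [hr_succ, sub_sub_cancel]
    simp only [hf, Finset.sum_range_sub']
    simpa [r] using tendsto_const_nhds.sub hr_zero
  exact ⟨∑' n, a (r n), tendsto_nhds_unique (hsum.hasSum.mapL f).tendsto_sum_nat hpartial⟩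

theorem exists_approx_of_mem_closure_iSup {R H ι : Type*} [Semiring R] [NormedAddCommGroup H]
    [Module R H] [Fintype ι] (M : ι → Submodule R H) {C : ℝ} (hC : 0 ≤ C)
    (happrox : ∀ h ∈ (⨆ i, M i : Submodule R H), ∀ ε : ℝ, 0 < ε →
      ∃ m : ι → H, (∀ i, m i ∈ M i) ∧ ‖h - ∑ i, m i‖ ≤ ε ∧ ∑ i, ‖m i‖ ^ 2 ≤ C * ‖h‖ ^ 2)
    {y : H} (hy : y ∈ closure ((⨆ i, M i : Submodule R H) : Set H)) :
    ∃ m : ι → H, (∀ i, m i ∈ M i) ∧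
      ‖y - ∑ i, m i‖ ≤ ‖y‖ / 2 ∧ ∑ i, ‖m i‖ ^ 2 ≤ 4 * C * ‖y‖ ^ 2 := by
  rcases eq_or_ne y 0 with rfl | hy0
  · exact ⟨0, fun i => (M i).zero_mem, by simp, by simp⟩
  have hε : 0 < ‖y‖ / 4 := by positivity
  obtain ⟨s, hsM, hys⟩ := Metric.mem_closure_iff.mp hy _ hε
  obtain ⟨m, hmM, hsm, hm⟩ := happrox s hsM _ hε
  have hs : ‖s‖ ≤ 2 * ‖y‖ := by
    linarith [norm_le_norm_add_norm_sub' s y, norm_sub_rev s y, dist_eq_norm y s]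
  refine ⟨m, hmM, ?_, ?_⟩
  · calc ‖y - ∑ i, m i‖ ≤ ‖y - s‖ + ‖s - ∑ i, m i‖ := norm_sub_le_norm_sub_add_norm_sub _ _ _
      _ ≤ ‖y‖ / 2 := by rw [← dist_eq_norm]; linarith
  · calc ∑ i, ‖m i‖ ^ 2 ≤ C * ‖s‖ ^ 2 := hm
      _ ≤ C * (2 * ‖y‖) ^ 2 := by gcongr
      _ = 4 * C * ‖y‖ ^ 2 := by ring

theorem sum_mem_closure_iSup {𝕜 H ι : Type*} [NormedField 𝕜] [NormedAddCommGroup H]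
    [NormedSpace 𝕜 H] [Fintype ι] (M : ι → Submodule 𝕜 H)
    (x : ∀ i, (M i).topologicalClosure) :
    ∑ i, (x i : H) ∈ closure ((⨆ i, M i : Submodule 𝕜 H) : Set H) :=
  (⨆ i, M i).topologicalClosure.sum_mem fun i _ =>
    Submodule.topologicalClosure_mono (le_iSup M i) (x i).2

/-- Conversely, if there is a constant `C > 0` such that every
`h` in the algebraic sum `M = M₁ + ⋯ + M_k` can be `ε`-approximated by sums
`m₁ + ⋯ + m_k` with `mᵢ ∈ Mᵢ` and `∑ ‖mᵢ‖² ≤ C‖h‖²`, then the summation operator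
`T : cl(M₁) ⊕₂ ⋯ ⊕₂ cl(M_k) → H` has closed range, and its range equals the
closure of `M` in `H`. -/
theorem stmt_1
    {H : Type*} [NormedAddCommGroup H] [InnerProductSpace ℂ H] [CompleteSpace H]
    {k : ℕ} (M : Fin k → Submodule ℂ H)
    (T : PiLp 2 (fun i : Fin k => ↥((M i).topologicalClosure)) →L[ℂ] H)
    (hT : ∀ x, T x = ∑ i, ((x i : H)))
    (C : ℝ) (hC : 0 < C)
    (happrox : ∀ h ∈ (⨆ i, M i : Submodule ℂ H), ∀ ε : ℝ, 0 < ε →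
      ∃ m : Fin k → H, (∀ i, m i ∈ M i) ∧
        ‖h - ∑ i, m i‖ ≤ ε ∧ ∑ i, ‖m i‖ ^ 2 ≤ C * ‖h‖ ^ 2) :
    IsClosed (Set.range T) ∧
      Set.range T = closure ((⨆ i, M i : Submodule ℂ H) : Set H) := by
  have hsub : Set.range T ⊆ closure ((⨆ i, M i : Submodule ℂ H) : Set H) := by
    rintro _ ⟨x, rfl⟩
    rw [hT]
    exact sum_mem_closure_iSup M x
  have hsup : closure ((⨆ i, M i : Submodule ℂ H) : Set H) ⊆ Set.range T := by
    refine T.subset_range_of_approx (C := 2 * √C) (by positivity) fun y hy => ?_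
    obtain ⟨m, hmM, hym, hm⟩ := exists_approx_of_mem_closure_iSup M hC.le happrox hy
    let x : PiLp 2 (fun i => ↥((M i).topologicalClosure)) :=
      WithLp.toLp 2 fun i => ⟨m i, (M i).le_topologicalClosure (hmM i)⟩
    have hTx : T x = ∑ i, m i := hT x
    refine ⟨x, ?_, by rwa [hTx], ?_⟩
    · rw [hTx]
      exact (⨆ i, M i).topologicalClosure.sub_mem hy (hTx ▸ hsub ⟨x, rfl⟩)
    · refine le_of_sq_le_sq ?_ (by positivity)
      calc ‖x‖ ^ 2 = ∑ i, ‖m i‖ ^ 2 := PiLp.norm_sq_eq_of_L2 _ x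
        _ ≤ (2 * √C * ‖y‖) ^ 2 := by rw [mul_pow, mul_pow, Real.sq_sqrt hC.le]; linarith
  have hrange := hsub.antisymm hsup
  exact ⟨hrange ▸ isClosed_closure, hrange⟩
end

section
/- Let d ≥ 1, let t ≥ −d be real, let n = (n₁,…,n_d) be a weight of positive integers, and let r ≥ 1. If a submodule M of ℂ[z₁,…,z_d]^r is n-quasi homogeneous, then every approximate stable generating set for M with respect to the norm ‖·‖_t that consists of n-quasi homogeneous elements is a stable generating set for M with respect to ‖·‖_t. -/
/-!
Everything splits along the weighted degree. Distinct monomials are orthogonal for `‖·‖_t`,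
so the quasi homogeneous components `h_m` of `h` are pairwise orthogonal; they lie in `M`
since `M` is generated by quasi homogeneous elements, and the degree-`m` part of an
approximate representation of `h_m` is again one, with smaller terms `g_i f_i`. As the weights
are positive, the degree-`m` part of `ℂ[z]^r` is finite dimensional, so the sums `∑ v_i` with
`v_i ∈ ℂ[z] f_i` of degree `m` and `∑ ‖v_i‖ ≤ R` form a compact, hence closed, set:
approximate representations of `h_m` become exact ones with the same bound. Summing over `m`,
orthogonality gives `‖g_i f_i‖ ≤ |A| ‖h‖` for each `i`.
-/

open scoped BigOperators
noncomputable section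

/-- The weight of the monomial `z^α` in the `𝓗_d^{(t)}` norm:
`‖z^α‖_t² = α! / ∏_{i=1}^{|α|} (d+t+i)`. -/
def wt (d : ℕ) (t : ℝ) (α : Fin d →₀ ℕ) : ℝ :=
  (∏ i, (Nat.factorial (α i) : ℝ)) /
    ∏ j ∈ Finset.range (∑ i, α i), ((d : ℝ) + t + (j + 1))

/-- The squared norm `‖f‖_t²` of a polynomial (distinct monomials orthogonal). -/
def tNormSq (d : ℕ) (t : ℝ) (f : MvPolynomial (Fin d) ℂ) : ℝ :=
  ∑ α ∈ f.support, ‖MvPolynomial.coeff α f‖ ^ 2 * wt d t α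

/-- The norm `‖h‖_t` of a vector-valued polynomial `h ∈ ℂ[z]^r`:
`‖(h₁,…,h_r)‖_t² = ∑_j ‖h_j‖_t²`. -/
def tNormVec (d r : ℕ) (t : ℝ) (h : Fin r → MvPolynomial (Fin d) ℂ) : ℝ :=
  Real.sqrt (∑ j, tNormSq d t (h j))

/-- `f` is `n`-quasi homogeneous of degree `m`: every monomial `z^α` appearing in `f`
satisfies `n₁α₁ + ⋯ + n_dα_d = m`. -/
def QuasiHomog (d : ℕ) (n : Fin d → ℕ) (m : ℕ) (f : MvPolynomial (Fin d) ℂ) : Prop :=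
  ∀ α ∈ f.support, ∑ i, n i * α i = m

/-- A vector-valued polynomial is `n`-quasi homogeneous of degree `m` if every
monomial appearing in any coordinate has weighted degree `m`. -/
def QuasiHomogVec (d r : ℕ) (n : Fin d → ℕ) (m : ℕ)
    (f : Fin r → MvPolynomial (Fin d) ℂ) : Prop :=
  ∀ j, QuasiHomog d n m (f j)

namespace MvPolynomial

variable {σ R ι : Type*} [CommSemiring R] {w : σ → ℕ}

section GradedAlgebra

attribute [local instance] weightedGradedAlgebra

theorem weightedHomogeneousComponent_mul_of_isWeightedHomogeneous {p q : MvPolynomial σ R}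
    {e : ℕ} (hq : q.IsWeightedHomogeneous w e) (m : ℕ) :
    weightedHomogeneousComponent w m (p * q) =
      if e ≤ m then weightedHomogeneousComponent w (m - e) p * q else 0 := by
  classical
  simp_rw [← weightedDecomposition.decompose'_apply R]
  exact DirectSum.coe_decompose_mul_of_right_mem _ m hq

end GradedAlgebra

variable (w) in
def weightedHomogeneousComponentPi (m : ℕ) :
    (ι → MvPolynomial σ R) →ₗ[R] ι → MvPolynomial σ R :=
  (weightedHomogeneousComponent w m).compLeft ι

theorem weightedHomogeneousComponentPi_apply (m : ℕ) (x : ι → MvPolynomial σ R) (j : ι) :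
    weightedHomogeneousComponentPi w m x j = weightedHomogeneousComponent w m (x j) :=
  rfl

theorem isWeightedHomogeneous_weightedHomogeneousComponentPi (m : ℕ)
    (x : ι → MvPolynomial σ R) (j : ι) :
    (weightedHomogeneousComponentPi w m x j).IsWeightedHomogeneous w m :=
  weightedHomogeneousComponent_isWeightedHomogeneous m (x j)

theorem exists_sum_weightedHomogeneousComponentPi_eq [Fintype ι] (w : σ → ℕ)
    (x : ι → MvPolynomial σ R) :
    ∃ D : Finset ℕ, ∑ m ∈ D, weightedHomogeneousComponentPi w m x = x := by
  classical
  refine ⟨Finset.univ.biUnion fun j => (x j).support.image (Finsupp.weight w), ?_⟩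
  ext1 j
  rw [Finset.sum_apply, ← finsum_eq_sum_of_support_subset,
    ← sum_weightedHomogeneousComponent w (x j)]
  · rfl
  intro m hm
  by_contra hmD
  refine hm (weightedHomogeneousComponent_eq_zero_of_notMem w (x j) m fun hmj => hmD ?_)
  exact Finset.mem_biUnion.mpr ⟨j, Finset.mem_univ j, hmj⟩

theorem exists_weightedHomogeneousComponentPi_smul_eq_smul {e : ℕ} {g : ι → MvPolynomial σ R}
    (hg : ∀ j, (g j).IsWeightedHomogeneous w e) (a : MvPolynomial σ R) (m : ℕ) :
    ∃ b : MvPolynomial σ R, weightedHomogeneousComponentPi w m (a • g) = b • g := by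
  classical
  refine ⟨if e ≤ m then weightedHomogeneousComponent w (m - e) a else 0, ?_⟩
  ext1 j
  simp only [weightedHomogeneousComponentPi_apply, Pi.smul_apply, smul_eq_mul,
    weightedHomogeneousComponent_mul_of_isWeightedHomogeneous (hg j)]
  split_ifs <;> simp

theorem weightedHomogeneousComponentPi_mem_span {G : Set (ι → MvPolynomial σ R)}
    (hG : ∀ g ∈ G, ∃ e, ∀ j, (g j).IsWeightedHomogeneous w e) {x : ι → MvPolynomial σ R}
    (hx : x ∈ Submodule.span (MvPolynomial σ R) G) (m : ℕ) :
    weightedHomogeneousComponentPi w m x ∈ Submodule.span (MvPolynomial σ R) G := by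
  obtain ⟨N, c, g, rfl⟩ := Submodule.mem_span_set'.mp hx
  rw [map_sum]
  refine Submodule.sum_mem _ fun i _ => ?_
  obtain ⟨e, he⟩ := hG _ (g i).2
  obtain ⟨b, hb⟩ := exists_weightedHomogeneousComponentPi_smul_eq_smul he (c i) m
  rw [hb]
  exact Submodule.smul_mem _ _ (Submodule.subset_span (g i).2)

end MvPolynomial

open MvPolynomial

section TNorm

variable {d : ℕ} {t : ℝ}

theorem wt_pos (ht : -(d : ℝ) ≤ t) (α : Fin d →₀ ℕ) : 0 < wt d t α := by
  have hdt : 0 ≤ (d : ℝ) + t := by linarith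
  exact div_pos (Finset.prod_pos fun i _ => mod_cast (α i).factorial_pos)
    (Finset.prod_pos fun j _ => by positivity)

theorem tNormSq_nonneg (ht : -(d : ℝ) ≤ t) (p : MvPolynomial (Fin d) ℂ) : 0 ≤ tNormSq d t p :=
  Finset.sum_nonneg fun α _ => mul_nonneg (sq_nonneg _) (wt_pos ht α).le

theorem tNormSq_eq_sum_of_support_subset {p : MvPolynomial (Fin d) ℂ} {s : Finset (Fin d →₀ ℕ)}
    (hs : p.support ⊆ s) : tNormSq d t p = ∑ α ∈ s, ‖coeff α p‖ ^ 2 * wt d t α :=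
  Finset.sum_subset hs fun α _ hα => by rw [notMem_support_iff.mp hα, norm_zero]; ring

theorem eq_zero_of_tNormSq_eq_zero (ht : -(d : ℝ) ≤ t) {p : MvPolynomial (Fin d) ℂ}
    (hp : tNormSq d t p = 0) : p = 0 := by
  ext α
  have hterm := (Finset.sum_eq_zero_iff_of_nonneg fun β _ =>
    mul_nonneg (sq_nonneg ‖coeff β p‖) (wt_pos ht β).le).mp hp
  by_contra hα
  have hpos : 0 < ‖coeff α p‖ ^ 2 * wt d t α :=
    mul_pos (pow_pos (norm_pos_iff.mpr hα) 2) (wt_pos ht α)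
  exact hpos.ne' (hterm α (mem_support_iff.mpr hα))

theorem tNormSq_weightedHomogeneousComponent_le (ht : -(d : ℝ) ≤ t) (w : Fin d → ℕ) (m : ℕ)
    (p : MvPolynomial (Fin d) ℂ) :
    tNormSq d t (weightedHomogeneousComponent w m p) ≤ tNormSq d t p := by
  classical
  rw [tNormSq_eq_sum_of_support_subset (s := p.support)]
  · refine Finset.sum_le_sum fun α _ => mul_le_mul_of_nonneg_right ?_ (wt_pos ht α).le
    rw [coeff_weightedHomogeneousComponent]
    split_ifs <;> simp
  · rw [support_weightedHomogeneousComponent]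
    exact Finset.filter_subset _ _

theorem tNormSq_sum_of_isWeightedHomogeneous {w : Fin d → ℕ} {D : Finset ℕ}
    {F : ℕ → MvPolynomial (Fin d) ℂ} (hF : ∀ m ∈ D, (F m).IsWeightedHomogeneous w m) :
    tNormSq d t (∑ m ∈ D, F m) = ∑ m ∈ D, tNormSq d t (F m) := by
  classical
  let supp := fun m => (F m).support
  rw [tNormSq_eq_sum_of_support_subset (s := D.biUnion supp) support_sum,
    Finset.sum_congr rfl fun m hm => tNormSq_eq_sum_of_support_subset (t := t) (p := F m)
      (Finset.subset_biUnion_of_mem supp hm),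
    Finset.sum_comm]
  refine Finset.sum_congr rfl fun α _ => ?_
  have hzero : ∀ m ∈ D, m ≠ Finsupp.weight w α → coeff α (F m) = 0 := fun m hm hne =>
    (hF m hm).coeff_eq_zero α (Ne.symm hne)
  rw [← Finset.sum_mul, coeff_sum]
  congr 1
  by_cases hαD : Finsupp.weight w α ∈ D
  · rw [Finset.sum_eq_single_of_mem _ hαD hzero,
      Finset.sum_eq_single_of_mem _ hαD fun m hm hne => by simp [hzero m hm hne]]
  · rw [Finset.sum_eq_zero fun m hm => hzero m hm (by rintro rfl; exact hαD hm),
      Finset.sum_eq_zero fun m hm => by simp [hzero m hm (by rintro rfl; exact hαD hm)]]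
    simp

variable {r : ℕ}

theorem tNormVec_nonneg (x : Fin r → MvPolynomial (Fin d) ℂ) : 0 ≤ tNormVec d r t x :=
  Real.sqrt_nonneg _

theorem tNormVec_sq (ht : -(d : ℝ) ≤ t) (x : Fin r → MvPolynomial (Fin d) ℂ) :
    tNormVec d r t x ^ 2 = ∑ j, tNormSq d t (x j) :=
  Real.sq_sqrt (Finset.sum_nonneg fun j _ => tNormSq_nonneg ht (x j))

theorem eq_zero_of_tNormVec_eq_zero (ht : -(d : ℝ) ≤ t) {x : Fin r → MvPolynomial (Fin d) ℂ}
    (hx : tNormVec d r t x = 0) : x = 0 := by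
  have hsum : ∑ j, tNormSq d t (x j) = 0 := by rw [← tNormVec_sq ht, hx, sq, zero_mul]
  ext1 j
  exact eq_zero_of_tNormSq_eq_zero ht ((Finset.sum_eq_zero_iff_of_nonneg fun j _ =>
    tNormSq_nonneg ht (x j)).mp hsum j (Finset.mem_univ j))

theorem tNormVec_weightedHomogeneousComponentPi_le (ht : -(d : ℝ) ≤ t) (w : Fin d → ℕ) (m : ℕ)
    (x : Fin r → MvPolynomial (Fin d) ℂ) :
    tNormVec d r t (weightedHomogeneousComponentPi w m x) ≤ tNormVec d r t x :=
  Real.sqrt_le_sqrt <| Finset.sum_le_sum fun j _ =>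
    tNormSq_weightedHomogeneousComponent_le ht w m (x j)

theorem tNormVec_sum_sq_of_isWeightedHomogeneous (ht : -(d : ℝ) ≤ t) {w : Fin d → ℕ}
    {D : Finset ℕ} {F : ℕ → Fin r → MvPolynomial (Fin d) ℂ}
    (hF : ∀ m ∈ D, ∀ j, (F m j).IsWeightedHomogeneous w m) :
    tNormVec d r t (∑ m ∈ D, F m) ^ 2 = ∑ m ∈ D, tNormVec d r t (F m) ^ 2 := by
  simp only [tNormVec_sq ht, Finset.sum_apply]
  rw [Finset.sum_comm]
  exact Finset.sum_congr rfl fun j _ =>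
    tNormSq_sum_of_isWeightedHomogeneous fun m hm => hF m hm j

theorem tNormVec_sum_le_of_isWeightedHomogeneous (ht : -(d : ℝ) ≤ t) {w : Fin d → ℕ}
    {D : Finset ℕ} {F H : ℕ → Fin r → MvPolynomial (Fin d) ℂ} {C : ℝ} (hC : 0 ≤ C)
    (hF : ∀ m ∈ D, ∀ j, (F m j).IsWeightedHomogeneous w m)
    (hH : ∀ m ∈ D, ∀ j, (H m j).IsWeightedHomogeneous w m)
    (hFH : ∀ m ∈ D, tNormVec d r t (F m) ≤ C * tNormVec d r t (H m)) :
    tNormVec d r t (∑ m ∈ D, F m) ≤ C * tNormVec d r t (∑ m ∈ D, H m) := by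
  refine (pow_le_pow_iff_left₀ (tNormVec_nonneg _)
    (mul_nonneg hC (tNormVec_nonneg _)) two_ne_zero).mp ?_
  rw [mul_pow, tNormVec_sum_sq_of_isWeightedHomogeneous ht hF,
    tNormVec_sum_sq_of_isWeightedHomogeneous ht hH, Finset.mul_sum]
  refine Finset.sum_le_sum fun m hm => ?_
  rw [← mul_pow]
  exact pow_le_pow_left₀ (tNormVec_nonneg _) (hFH m hm) 2

end TNorm

section DegreeCoordinates

theorem finite_setOf_weight_eq {σ : Type*} [Finite σ] {w : σ → ℕ} (hw : ∀ i, w i ≠ 0)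
    (m : ℕ) :
    {α : σ →₀ ℕ | Finsupp.weight w α = m}.Finite :=
  (Finsupp.finite_of_nat_weight_le w hw m).subset fun _ hα => le_of_eq hα

variable {d r : ℕ} (t : ℝ) {w : Fin d → ℕ} (hw : ∀ i, w i ≠ 0) (m : ℕ)

def weightFiber : Finset (Fin d →₀ ℕ) := (finite_setOf_weight_eq hw m).toFinset

theorem mem_weightFiber {α : Fin d →₀ ℕ} : α ∈ weightFiber hw m ↔ Finsupp.weight w α = m :=
  Set.Finite.mem_toFinset _

/-- The coordinates of the degree-`m` part of `x` in the `‖·‖_t`-orthonormal basis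
`z^α / √(wt α)`, `weight α = m`. -/
def degreeCoords :
    (Fin r → MvPolynomial (Fin d) ℂ) →ₗ[ℂ] EuclideanSpace ℂ (Fin r × weightFiber hw m) where
  toFun x := WithLp.toLp 2 fun p => (√(wt d t p.2) : ℂ) * coeff p.2 (x p.1)
  map_add' x y := by ext p; simp [mul_add]
  map_smul' c x := by ext p; simp [mul_left_comm]

theorem degreeCoords_weightedHomogeneousComponentPi (x : Fin r → MvPolynomial (Fin d) ℂ) :
    degreeCoords t hw m (weightedHomogeneousComponentPi w m x) = degreeCoords t hw m x := by
  ext p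
  simp [degreeCoords, weightedHomogeneousComponentPi_apply, coeff_weightedHomogeneousComponent,
    (mem_weightFiber hw m).mp p.2.2]

variable {t}

theorem norm_degreeCoords_of_isWeightedHomogeneous (ht : -(d : ℝ) ≤ t)
    {x : Fin r → MvPolynomial (Fin d) ℂ} (hx : ∀ j, (x j).IsWeightedHomogeneous w m) :
    ‖degreeCoords t hw m x‖ = tNormVec d r t x := by
  rw [EuclideanSpace.norm_eq, tNormVec, Fintype.sum_prod_type]
  congr 1
  refine Finset.sum_congr rfl fun j _ => ?_
  rw [tNormSq_eq_sum_of_support_subset (s := weightFiber hw m)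
    fun α hα => (mem_weightFiber hw m).mpr (hx j (mem_support_iff.mp hα)),
    ← Finset.sum_coe_sort (weightFiber hw m)]
  refine Finset.sum_congr rfl fun α _ => ?_
  simp [degreeCoords, mul_pow, Real.sq_sqrt (wt_pos ht _).le, mul_comm]

theorem norm_degreeCoords (ht : -(d : ℝ) ≤ t) (x : Fin r → MvPolynomial (Fin d) ℂ) :
    ‖degreeCoords t hw m x‖ = tNormVec d r t (weightedHomogeneousComponentPi w m x) := by
  rw [← degreeCoords_weightedHomogeneousComponentPi,
    norm_degreeCoords_of_isWeightedHomogeneous hw m ht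
      (isWeightedHomogeneous_weightedHomogeneousComponentPi m x)]

end DegreeCoordinates

theorem exists_eq_sum_of_forall_approx {ι E : Type*} [Fintype ι] [NormedAddCommGroup E]
    [ProperSpace E] {V : ι → Set E} (hV : ∀ i, IsClosed (V i)) {x : E} {R : ℝ}
    (happrox : ∀ ε : ℝ, 0 < ε →
      ∃ v : ι → E, (∀ i, v i ∈ V i) ∧ ‖x - ∑ i, v i‖ ≤ ε ∧ ∑ i, ‖v i‖ ≤ R) :
    ∃ v : ι → E, (∀ i, v i ∈ V i) ∧ x = ∑ i, v i ∧ ∑ i, ‖v i‖ ≤ R := by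
  set K : Set (ι → E) := Set.univ.pi V ∩ {v | ∑ i, ‖v i‖ ≤ R}
  have hK : IsCompact K := by
    refine Metric.isCompact_of_isClosed_isBounded
      ((isClosed_set_pi fun i _ => hV i).inter (isClosed_le (by fun_prop) continuous_const))
      (isBounded_iff_forall_norm_le.mpr ⟨R, fun v hv => ?_⟩)
    have hvR : ∑ i, ‖v i‖ ≤ R := hv.2
    refine (pi_norm_le_iff_of_nonneg ((Finset.sum_nonneg fun i _ => norm_nonneg _).trans hvR)).mpr
      fun i => (Finset.single_le_sum (fun i _ => norm_nonneg (v i)) (Finset.mem_univ i)).trans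
        hvR
  have hclosed : IsClosed ((fun v : ι → E => ∑ i, v i) '' K) :=
    (hK.image (continuous_finsetSum _ fun i _ => continuous_apply i)).isClosed
  have hx : x ∈ closure ((fun v : ι → E => ∑ i, v i) '' K) := by
    refine Metric.mem_closure_iff.mpr fun ε hε => ?_
    obtain ⟨v, hvV, hvx, hvR⟩ := happrox (ε / 2) (half_pos hε)
    exact ⟨_, ⟨v, ⟨fun i _ => hvV i, hvR⟩, rfl⟩, by rw [dist_eq_norm]; linarith⟩
  obtain ⟨v, ⟨hvV, hvR⟩, hvx⟩ := hclosed.closure_eq ▸ hx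
  exact ⟨v, fun i => hvV i (Set.mem_univ i), hvx.symm, hvR⟩

theorem exists_eq_sum_smul_of_forall_approx {d r k : ℕ} {t : ℝ} (ht : -(d : ℝ) ≤ t)
    {w : Fin d → ℕ} (hw : ∀ i, w i ≠ 0) {f : Fin k → Fin r → MvPolynomial (Fin d) ℂ}
    (hf : ∀ i, ∃ e, ∀ j, (f i j).IsWeightedHomogeneous w e) {m : ℕ}
    {x : Fin r → MvPolynomial (Fin d) ℂ} (hx : ∀ j, (x j).IsWeightedHomogeneous w m) {R : ℝ}
    (happrox : ∀ ε : ℝ, 0 < ε → ∃ g : Fin k → MvPolynomial (Fin d) ℂ,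
      tNormVec d r t (x - ∑ i, g i • f i) ≤ ε ∧ ∑ i, tNormVec d r t (g i • f i) ≤ R) :
    ∃ g : Fin k → MvPolynomial (Fin d) ℂ, x = ∑ i, g i • f i ∧
      (∀ i j, ((g i • f i) j).IsWeightedHomogeneous w m) ∧
      ∑ i, tNormVec d r t (g i • f i) ≤ R := by
  set Φ := degreeCoords (r := r) t hw m
  let V : Fin k → Submodule ℂ (EuclideanSpace ℂ (Fin r × weightFiber hw m)) := fun i =>
    LinearMap.range <|
      Φ ∘ₗ (LinearMap.toSpanSingleton (MvPolynomial (Fin d) ℂ) _ (f i)).restrictScalars ℂ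
  obtain ⟨v, hvV, hxv, hvR⟩ := exists_eq_sum_of_forall_approx (V := fun i => (V i : Set _))
    (fun i => (V i).closed_of_finiteDimensional) (x := Φ x) (R := R) fun ε hε => by
      obtain ⟨g, hgx, hgR⟩ := happrox ε hε
      refine ⟨fun i => Φ (g i • f i), fun i => ⟨g i, rfl⟩, ?_, ?_⟩
      · rw [← map_sum, ← map_sub, norm_degreeCoords hw m ht]
        exact (tNormVec_weightedHomogeneousComponentPi_le ht w m _).trans hgx
      · refine (Finset.sum_le_sum fun i _ => ?_).trans hgR
        rw [norm_degreeCoords hw m ht]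
        exact tNormVec_weightedHomogeneousComponentPi_le ht w m _
  choose a ha using hvV
  choose e he using hf
  choose b hb using fun i => exists_weightedHomogeneousComponentPi_smul_eq_smul (he i) (a i) m
  have hbhom : ∀ i j, ((b i • f i) j).IsWeightedHomogeneous w m := fun i =>
    hb i ▸ isWeightedHomogeneous_weightedHomogeneousComponentPi m _
  have hv : ∀ i, v i = Φ (b i • f i) := fun i => by
    rw [← hb, degreeCoords_weightedHomogeneousComponentPi, ← ha i]
    rfl
  refine ⟨b, ?_, hbhom, ?_⟩
  · have hdiff : ∀ j, ((x - ∑ i, b i • f i) j).IsWeightedHomogeneous w m := fun j => by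
      simp only [Pi.sub_apply, Finset.sum_apply]
      exact (hx j).sub (IsWeightedHomogeneous.sum _ _ _ fun i _ => hbhom i j)
    have hΦ : Φ (x - ∑ i, b i • f i) = 0 := by
      rw [map_sub, map_sum, hxv, ← Finset.sum_congr rfl fun i _ => hv i, sub_self]
    rw [← sub_eq_zero]
    refine eq_zero_of_tNormVec_eq_zero ht ?_
    rw [← norm_degreeCoords_of_isWeightedHomogeneous hw m ht hdiff, hΦ, norm_zero]
  · refine le_of_eq_of_le (Finset.sum_congr rfl fun i _ => ?_) hvR
    rw [hv, norm_degreeCoords_of_isWeightedHomogeneous hw m ht (hbhom i)]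

theorem quasiHomog_iff_isWeightedHomogeneous {d : ℕ} {n : Fin d → ℕ} {m : ℕ}
    {p : MvPolynomial (Fin d) ℂ} : QuasiHomog d n m p ↔ p.IsWeightedHomogeneous n m := by
  have hweight : ∀ α : Fin d →₀ ℕ, Finsupp.weight n α = ∑ i, n i * α i := fun α => by
    rw [Finsupp.weight_apply, Finsupp.sum_fintype _ _ fun i => by simp]
    simp [mul_comm]
  simp only [QuasiHomog, IsWeightedHomogeneous, mem_support_iff, hweight, Ne]

theorem stmt_6_general
    (d r : ℕ) (t : ℝ) (ht : -(d : ℝ) ≤ t)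
    (n : Fin d → ℕ) (hn : ∀ i, 0 < n i)
    (M : Submodule (MvPolynomial (Fin d) ℂ) (Fin r → MvPolynomial (Fin d) ℂ))
    -- `M` is `n`-quasi homogeneous: it is generated by quasi homogeneous elements
    (hM : ∃ G : Set (Fin r → MvPolynomial (Fin d) ℂ),
      (∀ g ∈ G, ∃ m, QuasiHomogVec d r n m g) ∧
      M = Submodule.span (MvPolynomial (Fin d) ℂ) G)
    -- `f₁, …, f_k` consist of `n`-quasi homogeneous elements of `M` …
    (k : ℕ) (f : Fin k → (Fin r → MvPolynomial (Fin d) ℂ))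
    (hfq : ∀ i, ∃ m, QuasiHomogVec d r n m (f i))
    -- … and form an approximate stable generating set for `M` w.r.t. `‖·‖_t`:
    (A : ℝ)
    (happrox : ∀ ε : ℝ, 0 < ε → ∀ h ∈ M, ∃ g : Fin k → MvPolynomial (Fin d) ℂ,
      tNormVec d r t (h - ∑ i, g i • f i) ≤ ε ∧
      ∑ i, tNormVec d r t (g i • f i) ≤ A * tNormVec d r t h) :
    -- then they form a stable generating set for `M` w.r.t. `‖·‖_t`:
    ∃ A' : ℝ, ∀ h ∈ M, ∃ g : Fin k → MvPolynomial (Fin d) ℂ,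
      h = ∑ i, g i • f i ∧
      ∑ i, tNormVec d r t (g i • f i) ≤ A' * tNormVec d r t h := by
  obtain ⟨G, hG, rfl⟩ := hM
  simp only [QuasiHomogVec, quasiHomog_iff_isWeightedHomogeneous] at hG hfq
  refine ⟨k * |A|, fun h hh => ?_⟩
  have hdeg (m : ℕ) := exists_eq_sum_smul_of_forall_approx ht (fun i => (hn i).ne') hfq
    (isWeightedHomogeneous_weightedHomogeneousComponentPi m h)
    fun ε hε => happrox ε hε _ (weightedHomogeneousComponentPi_mem_span hG hh m)
  choose g hg_eq hg_hom hg_le using hdeg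
  obtain ⟨D, hD⟩ := exists_sum_weightedHomogeneousComponentPi_eq n h
  refine ⟨fun i => ∑ m ∈ D, g m i, ?_, ?_⟩
  · calc h = ∑ m ∈ D, ∑ i, g m i • f i :=
          hD.symm.trans (Finset.sum_congr rfl fun m _ => hg_eq m)
      _ = ∑ i, (∑ m ∈ D, g m i) • f i := by simp_rw [Finset.sum_smul]; exact Finset.sum_comm
  · have hterm (i : Fin k) :
        tNormVec d r t ((∑ m ∈ D, g m i) • f i) ≤ |A| * tNormVec d r t h := by
      rw [Finset.sum_smul]
      conv_rhs => rw [← hD]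
      refine tNormVec_sum_le_of_isWeightedHomogeneous ht (abs_nonneg A) (fun m _ => hg_hom m i)
        (fun m _ => isWeightedHomogeneous_weightedHomogeneousComponentPi m h) fun m _ => ?_
      exact (Finset.single_le_sum (f := fun i => tNormVec d r t (g m i • f i))
        (fun _ _ => tNormVec_nonneg _) (Finset.mem_univ i)).trans
        ((hg_le m).trans (mul_le_mul_of_nonneg_right (le_abs_self A) (tNormVec_nonneg _)))
    calc ∑ i, tNormVec d r t ((∑ m ∈ D, g m i) • f i) ≤ ∑ _i : Fin k, |A| * tNormVec d r t h :=
          Finset.sum_le_sum fun i _ => hterm i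
      _ = k * |A| * tNormVec d r t h := by simp [mul_assoc]

/-- If `M ⊆ ℂ[z₁,…,z_d]^r` is an `n`-quasi homogeneous submodule,
then every approximate stable generating set `f₁,…,f_k` for `M` (w.r.t. `‖·‖_t`)
consisting of `n`-quasi homogeneous elements is a stable generating set for `M`
(w.r.t. `‖·‖_t`). -/
theorem stmt_6
    (d r : ℕ) (hd : 1 ≤ d) (hr : 1 ≤ r) (t : ℝ) (ht : -(d : ℝ) ≤ t)
    (n : Fin d → ℕ) (hn : ∀ i, 0 < n i)
    (M : Submodule (MvPolynomial (Fin d) ℂ) (Fin r → MvPolynomial (Fin d) ℂ))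
    -- `M` is `n`-quasi homogeneous: it is generated by quasi homogeneous elements
    (hM : ∃ G : Set (Fin r → MvPolynomial (Fin d) ℂ),
      (∀ g ∈ G, ∃ m, QuasiHomogVec d r n m g) ∧
      M = Submodule.span (MvPolynomial (Fin d) ℂ) G)
    -- `f₁, …, f_k` consist of `n`-quasi homogeneous elements of `M` …
    (k : ℕ) (f : Fin k → (Fin r → MvPolynomial (Fin d) ℂ))
    (hfM : ∀ i, f i ∈ M)
    (hfq : ∀ i, ∃ m, QuasiHomogVec d r n m (f i))
    -- … and form an approximate stable generating set for `M` w.r.t. `‖·‖_t`: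
    (A : ℝ)
    (happrox : ∀ ε : ℝ, 0 < ε → ∀ h ∈ M, ∃ g : Fin k → MvPolynomial (Fin d) ℂ,
      tNormVec d r t (h - ∑ i, g i • f i) ≤ ε ∧
      ∑ i, tNormVec d r t (g i • f i) ≤ A * tNormVec d r t h) :
    -- then they form a stable generating set for `M` w.r.t. `‖·‖_t`:
    ∃ A' : ℝ, ∀ h ∈ M, ∃ g : Fin k → MvPolynomial (Fin d) ℂ,
      h = ∑ i, g i • f i ∧
      ∑ i, tNormVec d r t (g i • f i) ≤ A' * tNormVec d r t h :=
  stmt_6_general d r t ht n hn M hM k f hfq A happrox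
end
end

section
/- Let M and N be linear subspaces of a complex Hilbert space H such that cl(M) ∩ N = {0}, where cl(M) is the closure of M. Let T be a linear map defined on the subspace M + N with values in another Hilbert space K. If T is bounded on M (i.e., there is C with ‖Tm‖ ≤ C‖m‖ for all m ∈ M) and N is finite dimensional, then T is bounded on M + N (i.e., there is C' with ‖Tv‖ ≤ C'‖v‖ for all v ∈ M + N). -/
/-!
Since `N` is finite dimensional and meets the closed subspace `cl(M)` only in `0`, the quotient
map `H → H ⧸ cl(M)` is injective, hence anti-Lipschitz, on `N`. As `m + n` and `n` have the same
image for `m ∈ M`, this gives `‖n‖ ≤ c ‖m + n‖`, and then also `‖m‖ ≤ (1 + c) ‖m + n‖`. The bound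
on `M` and the automatic continuity of `T` on the finite-dimensional `N` finish the proof.
-/

theorem Submodule.exists_norm_le_mul_norm_add_of_disjoint {𝕜 E : Type*}
    [NontriviallyNormedField 𝕜] [CompleteSpace 𝕜] [NormedAddCommGroup E] [NormedSpace 𝕜 E]
    {S N : Submodule 𝕜 E} (hS : IsClosed (S : Set E)) [FiniteDimensional 𝕜 N]
    (hSN : Disjoint S N) :
    ∃ c : ℝ, ∀ x ∈ S, ∀ y ∈ N, ‖y‖ ≤ c * ‖x + y‖ := by
  have hker : LinearMap.ker (S.mkQ ∘ₗ N.subtype) = ⊥ := by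
    rw [LinearMap.ker_comp, Submodule.ker_mkQ, ← Submodule.disjoint_iff_comap_eq_bot]
    exact hSN.symm
  -- `hS` acts as the instance making `E ⧸ S` Hausdorff, which the anti-Lipschitz bound needs.
  obtain ⟨c, -, hc⟩ := (S.mkQ ∘ₗ N.subtype).exists_antilipschitzWith hker
  refine ⟨c, fun x hx y hy => ?_⟩
  calc ‖y‖ ≤ c * ‖S.mkQ y‖ := ZeroHomClass.bound_of_antilipschitz _ hc ⟨y, hy⟩
    _ = c * ‖S.mkQ (x + y)‖ := by
      rw [map_add, S.mkQ_apply x, (Submodule.Quotient.mk_eq_zero S).mpr hx, zero_add]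
    _ ≤ c * ‖x + y‖ := by gcongr; exact Submodule.Quotient.norm_mk_le S _

theorem stmt_13_general
    {H K : Type*} [NormedAddCommGroup H] [InnerProductSpace ℂ H]
    [NormedAddCommGroup K] [InnerProductSpace ℂ K]
    (M N : Submodule ℂ H)
    (hMN : M.topologicalClosure ⊓ N = ⊥)
    (T : ↥(M ⊔ N) →ₗ[ℂ] K)
    (C : ℝ)
    (hbdd : ∀ (m : H) (hm : m ∈ M), ‖T ⟨m, Submodule.mem_sup_left hm⟩‖ ≤ C * ‖m‖)
    (hfin : FiniteDimensional ℂ ↥N) :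
    ∃ C' : ℝ, ∀ v : ↥(M ⊔ N), ‖T v‖ ≤ C' * ‖v‖ := by
  obtain ⟨c, hc⟩ := M.topologicalClosure.exists_norm_le_mul_norm_add_of_disjoint
    M.isClosed_topologicalClosure (disjoint_iff.mpr hMN)
  let TN : N →L[ℂ] K := LinearMap.toContinuousLinearMap (T ∘ₗ Submodule.inclusion le_sup_right)
  refine ⟨|C| * (1 + c) + ‖TN‖ * c, fun ⟨v, hv⟩ => ?_⟩
  obtain ⟨m, hm, n, hn, rfl⟩ := Submodule.mem_sup.mp hv
  have hn_le : ‖n‖ ≤ c * ‖m + n‖ := hc m (M.le_topologicalClosure hm) n hn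
  have hm_le : ‖m‖ ≤ (1 + c) * ‖m + n‖ := by
    calc ‖m‖ = ‖(m + n) - n‖ := by rw [add_sub_cancel_right]
      _ ≤ ‖m + n‖ + ‖n‖ := norm_sub_le _ _
      _ ≤ (1 + c) * ‖m + n‖ := by linarith
  have hsplit : (⟨m + n, hv⟩ : ↥(M ⊔ N)) =
      ⟨m, Submodule.mem_sup_left hm⟩ + ⟨n, Submodule.mem_sup_right hn⟩ := rfl
  calc ‖T ⟨m + n, hv⟩‖
      ≤ ‖T ⟨m, Submodule.mem_sup_left hm⟩‖ + ‖TN ⟨n, hn⟩‖ := by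
        rw [hsplit, map_add]; exact norm_add_le _ _
    _ ≤ |C| * ‖m‖ + ‖TN‖ * ‖n‖ := by
        gcongr
        · exact (hbdd m hm).trans (by gcongr; exact le_abs_self C)
        · exact TN.le_opNorm _
    _ ≤ (|C| * (1 + c) + ‖TN‖ * c) * ‖m + n‖ := by
        have hCm := mul_le_mul_of_nonneg_left hm_le (abs_nonneg C)
        have hTn := mul_le_mul_of_nonneg_left hn_le TN.opNorm_nonneg
        linarith

/-- Let `M, N` be linear subspaces of a complex Hilbert space `H`
with `cl(M) ∩ N = {0}`, and let `T` be a linear map defined on `M + N` with values in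
a Hilbert space `K`. If `T` is bounded on `M` and `N` is finite dimensional, then `T`
is bounded on `M + N`. -/
theorem stmt_13
    {H K : Type*} [NormedAddCommGroup H] [InnerProductSpace ℂ H] [CompleteSpace H]
    [NormedAddCommGroup K] [InnerProductSpace ℂ K] [CompleteSpace K]
    (M N : Submodule ℂ H)
    (hMN : M.topologicalClosure ⊓ N = ⊥)
    (T : ↥(M ⊔ N) →ₗ[ℂ] K)
    (C : ℝ)
    (hbdd : ∀ (m : H) (hm : m ∈ M), ‖T ⟨m, Submodule.mem_sup_left hm⟩‖ ≤ C * ‖m‖)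
    (hfin : FiniteDimensional ℂ ↥N) :
    ∃ C' : ℝ, ∀ v : ↥(M ⊔ N), ‖T v‖ ≤ C' * ‖v‖ :=
  stmt_13_general M N hMN T C hbdd hfin
end
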